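/- Every normalized 3-qubit pure state ψ whose three single-qubit reduced density matrices all equal (1/2)·I₂ is LU-equivalent to the GHZ state: there exist 2×2 unitary matrices U₁, U₂, U₃ such that ψ = (U₁ ⊗ U₂ ⊗ U₃) · GHZ, where GHZ = (|000⟩ + |111⟩)/√2. -/

import Mathlib

open Complex Matrix

/-- Action of a local unitary `⊗ₖ U k` on an `n`-qubit state. -/
noncomputable def luApply {n : ℕ} (U : Fin n → Matrix (Fin 2) (Fin 2) ℂ)
    (ψ : (Fin n → Fin 2) → ℂ) : (Fin n → Fin 2) → ℂ :=
  fun i => ∑ j : Fin n → Fin 2, (∏ k, U k (i k) (j k)) * ψ j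

/-- Single-qubit reduced density matrix of an `n`-qubit state at position `m`. -/
noncomputable def reduced1 {n : ℕ} (ψ : (Fin n → Fin 2) → ℂ) (m : Fin n) :
    Matrix (Fin 2) (Fin 2) ℂ :=
  Matrix.of fun a b => ∑ c : Fin n → Fin 2,
    if c m = 0 then
      ψ (Function.update c m a) * starRingEnd ℂ (ψ (Function.update c m b))
    else 0

/-- The three-qubit GHZ state `(|000⟩ + |111⟩)/√2`. -/
noncomputable def GHZ : (Fin 3 → Fin 2) → ℂ := fun i =>
  ((if i = (fun _ => 0) then 1 else 0) + (if i = (fun _ => 1) then 1 else 0)) /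
    Real.sqrt 2

local notation "conj'" => starRingEnd ℂ

lemma quad_root (a m b : ℂ) : ∃ x y : ℂ, ¬(x = 0 ∧ y = 0) ∧ a*x^2 + m*x*y + b*y^2 = 0 := by
  by_cases ha : a = 0
  · exact ⟨1, 0, by simp, by simp [ha]⟩
  · obtain ⟨s, hs⟩ := IsAlgClosed.exists_pow_nat_eq (m^2 - 4*a*b) (n := 2) (by norm_num)
    refine ⟨-m + s, 2*a, fun h => ha (by simpa using h.2), ?_⟩
    linear_combination a * hs

lemma sum_conj_zero {z w : ℂ} (h : z * conj' z + w * conj' w = 0) : z = 0 ∧ w = 0 := by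
  rw [Complex.mul_conj, Complex.mul_conj, ← Complex.ofReal_add, Complex.ofReal_eq_zero] at h
  constructor <;> rw [← Complex.normSq_eq_zero] <;> nlinarith [Complex.normSq_nonneg z, Complex.normSq_nonneg w]

lemma rank1_col0 (p0 p1 p2 p3 : ℂ) (hdet : p0*p3 = p1*p2) (h : ¬(p0 = 0 ∧ p2 = 0)) :
    ∃ u0 u1 t0 t1 : ℂ, u0 * conj' u0 + u1 * conj' u1 = 1 ∧
      p0 = u0*t0 ∧ p1 = u0*t1 ∧ p2 = u1*t0 ∧ p3 = u1*t1 := by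
  set S : ℝ := Complex.normSq p0 + Complex.normSq p2 with hS
  have hSpos : 0 < S := by
    rcases not_and_or.mp h with h0 | h0
    · have := Complex.normSq_pos.mpr h0
      have := Complex.normSq_nonneg p2; positivity
    · have := Complex.normSq_pos.mpr h0
      have := Complex.normSq_nonneg p0; positivity
  set s : ℝ := Real.sqrt S with hs
  have hspos : 0 < s := Real.sqrt_pos.mpr hSpos
  have hsne : (s : ℂ) ≠ 0 := by exact_mod_cast ne_of_gt hspos
  have hs2 : (s : ℂ) * (s : ℂ) = p0 * conj' p0 + p2 * conj' p2 := by
    rw [Complex.mul_conj, Complex.mul_conj, ← Complex.ofReal_mul, Real.mul_self_sqrt hSpos.le,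
      ← Complex.ofReal_add]
  refine ⟨p0 / s, p2 / s, s, (conj' p0 * p1 + conj' p2 * p3) / s, ?_, ?_, ?_, ?_, ?_⟩
  · rw [map_div₀, map_div₀, Complex.conj_ofReal]
    field_simp
    linear_combination (-1:ℂ) * hs2
  · field_simp
  · field_simp
    linear_combination (-(conj' p2)) * hdet + p1 * hs2
  · field_simp
  · field_simp
    linear_combination (conj' p0) * hdet + p3 * hs2

lemma rank1 (p0 p1 p2 p3 : ℂ) (hdet : p0*p3 = p1*p2) (hne : ¬(p0 = 0 ∧ p1 = 0 ∧ p2 = 0 ∧ p3 = 0)) :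
    ∃ u0 u1 t0 t1 : ℂ, u0 * conj' u0 + u1 * conj' u1 = 1 ∧
      p0 = u0*t0 ∧ p1 = u0*t1 ∧ p2 = u1*t0 ∧ p3 = u1*t1 := by
  by_cases h : p0 = 0 ∧ p2 = 0
  · obtain ⟨h0, h2⟩ := h
    have h13 : ¬(p1 = 0 ∧ p3 = 0) := fun h' => hne ⟨h0, h'.1, h2, h'.2⟩
    obtain ⟨u0, u1, t0, t1, hu, e1, e0, e3, e2⟩ :=
      rank1_col0 p1 p0 p3 p2 (by linear_combination -hdet) h13
    exact ⟨u0, u1, t1, t0, hu, e0, e1, e2, e3⟩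
  · exact rank1_col0 p0 p1 p2 p3 hdet h

lemma step2 (p0 p1 p2 p3 q0 q1 q2 q3 : ℂ)
    (hdet : p0*p3 = p1*p2)
    (hPnorm : p0*conj' p0 + p1*conj' p1 + p2*conj' p2 + p3*conj' p3 = 1/2)
    (hQnorm : q0*conj' q0 + q1*conj' q1 + q2*conj' q2 + q3*conj' q3 = 1/2)
    (hrow00 : p0*conj' p0 + p1*conj' p1 + q0*conj' q0 + q1*conj' q1 = 1/2)
    (hrow01 : p0*conj' p2 + p1*conj' p3 + q0*conj' q2 + q1*conj' q3 = 0)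
    (hrow10 : p2*conj' p0 + p3*conj' p1 + q2*conj' q0 + q3*conj' q1 = 0)
    (hrow11 : p2*conj' p2 + p3*conj' p3 + q2*conj' q2 + q3*conj' q3 = 1/2)
    (hcol00 : p0*conj' p0 + p2*conj' p2 + q0*conj' q0 + q2*conj' q2 = 1/2)
    (hcol01 : p0*conj' p1 + p2*conj' p3 + q0*conj' q1 + q2*conj' q3 = 0)
    (hcol10 : p1*conj' p0 + p3*conj' p2 + q1*conj' q0 + q3*conj' q2 = 0)
    (hcol11 : p1*conj' p1 + p3*conj' p3 + q1*conj' q1 + q3*conj' q3 = 1/2) :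
    ∃ u0 u1 t0 t1 w0 w1 : ℂ,
      u0*conj' u0 + u1*conj' u1 = 1 ∧
      t0*conj' t0 + t1*conj' t1 = 1/2 ∧
      w0*conj' w0 + w1*conj' w1 = 1/2 ∧
      conj' t0 * w0 + conj' t1 * w1 = 0 ∧
      p0 = u0*t0 ∧ p1 = u0*t1 ∧ p2 = u1*t0 ∧ p3 = u1*t1 ∧
      q0 = -(conj' u1)*w0 ∧ q1 = -(conj' u1)*w1 ∧ q2 = conj' u0 * w0 ∧ q3 = conj' u0 * w1 := by
  have hne : ¬(p0 = 0 ∧ p1 = 0 ∧ p2 = 0 ∧ p3 = 0) := by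
    rintro ⟨h0, h1, h2, h3⟩
    rw [h0, h1, h2, h3] at hPnorm
    norm_num at hPnorm
  obtain ⟨u0, u1, t0, t1, hu, hp0, hp1, hp2, hp3⟩ := rank1 p0 p1 p2 p3 hdet hne
  simp only [hp0, hp1, hp2, hp3] at hPnorm hrow00 hrow01 hrow10 hrow11 hcol00 hcol01 hcol10 hcol11
  simp only [_root_.map_mul] at hPnorm hrow00 hrow01 hrow10 hrow11 hcol00 hcol01 hcol10 hcol11
  have ht : t0*conj' t0 + t1*conj' t1 = 1/2 := by
    linear_combination hPnorm + (-(t0*conj' t0 + t1*conj' t1)) * hu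
  have hQ00 : q0*conj' q0 + q1*conj' q1 = 1/2 - u0*conj' u0 * (1/2) := by
    linear_combination hrow00 - (u0*conj' u0)*ht
  have hQ01 : q0*conj' q2 + q1*conj' q3 = - (u0*conj' u1 * (1/2)) := by
    linear_combination hrow01 - (u0*conj' u1)*ht
  have hQ10 : q2*conj' q0 + q3*conj' q1 = - (u1*conj' u0 * (1/2)) := by
    linear_combination hrow10 - (u1*conj' u0)*ht
  have hQ11 : q2*conj' q2 + q3*conj' q3 = 1/2 - u1*conj' u1 * (1/2) := by
    linear_combination hrow11 - (u1*conj' u1)*ht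
  have hzz : (conj' u0*q0 + conj' u1*q2) * conj' (conj' u0*q0 + conj' u1*q2)
      + (conj' u0*q1 + conj' u1*q3) * conj' (conj' u0*q1 + conj' u1*q3) = 0 := by
    simp only [_root_.map_add, _root_.map_mul, Complex.conj_conj]
    linear_combination (conj' u0*u0)*hQ00 + (conj' u0*u1)*hQ01 + (conj' u1*u0)*hQ10
      + (conj' u1*u1)*hQ11 + (-(u0*conj' u0 + u1*conj' u1)/2)*hu
  obtain ⟨hz0, hz1⟩ := sum_conj_zero hzz
  obtain ⟨w0, hw0def⟩ : ∃ w : ℂ, w = -u1*q0 + u0*q2 := ⟨_, rfl⟩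
  obtain ⟨w1, hw1def⟩ : ∃ w : ℂ, w = -u1*q1 + u0*q3 := ⟨_, rfl⟩
  have hq0 : q0 = -(conj' u1)*w0 := by
    linear_combination u0*hz0 - q0*hu + (conj' u1)*hw0def
  have hq1 : q1 = -(conj' u1)*w1 := by
    linear_combination u0*hz1 - q1*hu + (conj' u1)*hw1def
  have hq2 : q2 = conj' u0 * w0 := by
    linear_combination u1*hz0 - q2*hu - (conj' u0)*hw0def
  have hq3 : q3 = conj' u0 * w1 := by
    linear_combination u1*hz1 - q3*hu - (conj' u0)*hw1def
  simp only [hq0, hq1, hq2, hq3] at hQnorm hcol00 hcol01 hcol10 hcol11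
  simp only [_root_.map_mul, _root_.map_neg, Complex.conj_conj] at hQnorm hcol00 hcol01 hcol10 hcol11
  have hw : w0*conj' w0 + w1*conj' w1 = 1/2 := by
    linear_combination hQnorm + (-(w0*conj' w0 + w1*conj' w1)) * hu
  have hW00 : w0*conj' w0 = 1/2 - t0*conj' t0 := by
    linear_combination hcol00 - (t0*conj' t0 + w0*conj' w0)*hu
  have hW01 : w0*conj' w1 = -(t0*conj' t1) := by
    linear_combination hcol01 - (t0*conj' t1 + w0*conj' w1)*hu
  have hW10 : w1*conj' w0 = -(t1*conj' t0) := by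
    linear_combination hcol10 - (t1*conj' t0 + w1*conj' w0)*hu
  have hW11 : w1*conj' w1 = 1/2 - t1*conj' t1 := by
    linear_combination hcol11 - (t1*conj' t1 + w1*conj' w1)*hu
  have hSS : (conj' t0 * w0 + conj' t1 * w1) * conj' (conj' t0 * w0 + conj' t1 * w1) = 0 := by
    simp only [_root_.map_add, _root_.map_mul, Complex.conj_conj]
    linear_combination (t0*conj' t0)*hW00 + (conj' t0*t1)*hW01 + (conj' t1*t0)*hW10
      + (t1*conj' t1)*hW11 + (-(t0*conj' t0 + t1*conj' t1))*ht
  have horth : conj' t0 * w0 + conj' t1 * w1 = 0 :=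
    (sum_conj_zero (z := conj' t0 * w0 + conj' t1 * w1) (w := 0) (by simpa using hSS)).1
  exact ⟨u0, u1, t0, t1, w0, w1, hu, ht, hw, horth, hp0, hp1, hp2, hp3, hq0, hq1, hq2, hq3⟩

def e3 : (Fin 2 × Fin 2 × Fin 2) ≃ (Fin 3 → Fin 2) where
  toFun x := ![x.1, x.2.1, x.2.2]
  invFun c := (c 0, c 1, c 2)
  left_inv := by rintro ⟨a, b, c⟩; rfl
  right_inv := by intro c; funext k; fin_cases k <;> rfl

lemma sum_funs (f : (Fin 3 → Fin 2) → ℂ) :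
    ∑ c : Fin 3 → Fin 2, f c =
      f ![0,0,0] + f ![0,0,1] + f ![0,1,0] + f ![0,1,1]
      + f ![1,0,0] + f ![1,0,1] + f ![1,1,0] + f ![1,1,1] := by
  rw [← Fintype.sum_equiv e3 (fun x => f (e3 x)) f (fun x => rfl)]
  rw [Fintype.sum_prod_type]
  simp only [Fintype.sum_prod_type]
  rw [Fin.sum_univ_two]
  simp only [Fin.sum_univ_two]
  simp only [e3, Equiv.coe_fn_mk]
  ring

lemma red0 (ψ : (Fin 3 → Fin 2) → ℂ) (a b : Fin 2) :
    reduced1 ψ 0 a b =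
      ψ ![a,0,0] * conj' (ψ ![b,0,0]) + ψ ![a,0,1] * conj' (ψ ![b,0,1])
      + ψ ![a,1,0] * conj' (ψ ![b,1,0]) + ψ ![a,1,1] * conj' (ψ ![b,1,1]) := by
  have h : ∀ (x y z : Fin 2) (w : Fin 2), Function.update ![x, y, z] (0 : Fin 3) w = ![w, y, z] := by
    intro x y z w; funext k; fin_cases k <;> simp [Function.update_apply]
  rw [reduced1, Matrix.of_apply, sum_funs]
  norm_num [h]

lemma red1 (ψ : (Fin 3 → Fin 2) → ℂ) (a b : Fin 2) :
    reduced1 ψ 1 a b =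
      ψ ![0,a,0] * conj' (ψ ![0,b,0]) + ψ ![0,a,1] * conj' (ψ ![0,b,1])
      + ψ ![1,a,0] * conj' (ψ ![1,b,0]) + ψ ![1,a,1] * conj' (ψ ![1,b,1]) := by
  have h : ∀ (x y z : Fin 2) (w : Fin 2), Function.update ![x, y, z] (1 : Fin 3) w = ![x, w, z] := by
    intro x y z w; funext k; fin_cases k <;> simp [Function.update_apply]
  rw [reduced1, Matrix.of_apply, sum_funs]
  norm_num [h]

lemma red2 (ψ : (Fin 3 → Fin 2) → ℂ) (a b : Fin 2) :
    reduced1 ψ 2 a b =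
      ψ ![0,0,a] * conj' (ψ ![0,0,b]) + ψ ![0,1,a] * conj' (ψ ![0,1,b])
      + ψ ![1,0,a] * conj' (ψ ![1,0,b]) + ψ ![1,1,a] * conj' (ψ ![1,1,b]) := by
  have h : ∀ (x y z : Fin 2) (w : Fin 2), Function.update ![x, y, z] (2 : Fin 3) w = ![x, y, w] := by
    intro x y z w; funext k; fin_cases k <;> simp [Function.update_apply]
  rw [reduced1, Matrix.of_apply, sum_funs]
  norm_num [h, Matrix.cons_val_two, Matrix.tail_cons, Matrix.head_cons]

lemma key (a0 a1 a2 a3 b0 b1 b2 b3 : ℂ)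
    (H1 : a0*conj' a0 + a1*conj' a1 + a2*conj' a2 + a3*conj' a3 = 1/2)
    (H2 : b0*conj' b0 + b1*conj' b1 + b2*conj' b2 + b3*conj' b3 = 1/2)
    (H3 : a0*conj' b0 + a1*conj' b1 + a2*conj' b2 + a3*conj' b3 = 0)
    (H4 : b0*conj' a0 + b1*conj' a1 + b2*conj' a2 + b3*conj' a3 = 0)
    (H5 : a0*conj' a0 + a1*conj' a1 + b0*conj' b0 + b1*conj' b1 = 1/2)
    (H6 : a0*conj' a2 + a1*conj' a3 + b0*conj' b2 + b1*conj' b3 = 0)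
    (H7 : a2*conj' a0 + a3*conj' a1 + b2*conj' b0 + b3*conj' b1 = 0)
    (H8 : a2*conj' a2 + a3*conj' a3 + b2*conj' b2 + b3*conj' b3 = 1/2)
    (H9 : a0*conj' a0 + a2*conj' a2 + b0*conj' b0 + b2*conj' b2 = 1/2)
    (H10 : a0*conj' a1 + a2*conj' a3 + b0*conj' b1 + b2*conj' b3 = 0)
    (H11 : a1*conj' a0 + a3*conj' a2 + b1*conj' b0 + b3*conj' b2 = 0)
    (H12 : a1*conj' a1 + a3*conj' a3 + b1*conj' b1 + b3*conj' b3 = 1/2) :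
    ∃ x y u0 u1 t0 t1 w0 w1 : ℂ,
      x*conj' x + y*conj' y = 1 ∧
      u0*conj' u0 + u1*conj' u1 = 1 ∧
      t0*conj' t0 + t1*conj' t1 = 1/2 ∧
      w0*conj' w0 + w1*conj' w1 = 1/2 ∧
      conj' t0 * w0 + conj' t1 * w1 = 0 ∧
      a0 = conj' x*u0*t0 + y*(conj' u1)*w0 ∧
      a1 = conj' x*u0*t1 + y*(conj' u1)*w1 ∧
      a2 = conj' x*u1*t0 - y*(conj' u0)*w0 ∧
      a3 = conj' x*u1*t1 - y*(conj' u0)*w1 ∧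
      b0 = conj' y*u0*t0 - x*(conj' u1)*w0 ∧
      b1 = conj' y*u0*t1 - x*(conj' u1)*w1 ∧
      b2 = conj' y*u1*t0 + x*(conj' u0)*w0 ∧
      b3 = conj' y*u1*t1 + x*(conj' u0)*w1 := by
  obtain ⟨x0, y0, hne0, hq⟩ :=
    quad_root (a0*a3 - a1*a2) (a0*b3 + a3*b0 - a1*b2 - a2*b1) (b0*b3 - b1*b2)
  set R : ℝ := Complex.normSq x0 + Complex.normSq y0 with hR
  have hRpos : 0 < R := by
    rcases not_and_or.mp hne0 with h0 | h0
    · have := Complex.normSq_pos.mpr h0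
      have := Complex.normSq_nonneg y0; positivity
    · have := Complex.normSq_pos.mpr h0
      have := Complex.normSq_nonneg x0; positivity
  set r : ℝ := Real.sqrt R with hr
  have hrpos : 0 < r := Real.sqrt_pos.mpr hRpos
  have hrne : (r : ℂ) ≠ 0 := by exact_mod_cast ne_of_gt hrpos
  have hr2 : (r : ℂ) * (r : ℂ) = x0*conj' x0 + y0*conj' y0 := by
    rw [Complex.mul_conj, Complex.mul_conj, ← Complex.ofReal_mul, Real.mul_self_sqrt hRpos.le,
      ← Complex.ofReal_add]
  set x : ℂ := x0 / r with hxdef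
  set y : ℂ := y0 / r with hydef
  have hcx : conj' x = conj' x0 / r := by rw [hxdef, _root_.map_div₀, Complex.conj_ofReal]
  have hcy : conj' y = conj' y0 / r := by rw [hydef, _root_.map_div₀, Complex.conj_ofReal]
  have hxy : x*conj' x + y*conj' y = 1 := by
    rw [hcx, hcy, hxdef, hydef]
    field_simp
    linear_combination (-1 : ℂ) * hr2
  obtain ⟨p0, hp0⟩ : ∃ p : ℂ, p = x*a0 + y*b0 := ⟨_, rfl⟩
  obtain ⟨p1, hp1⟩ : ∃ p : ℂ, p = x*a1 + y*b1 := ⟨_, rfl⟩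
  obtain ⟨p2, hp2⟩ : ∃ p : ℂ, p = x*a2 + y*b2 := ⟨_, rfl⟩
  obtain ⟨p3, hp3⟩ : ∃ p : ℂ, p = x*a3 + y*b3 := ⟨_, rfl⟩
  obtain ⟨q0, hq0⟩ : ∃ q : ℂ, q = -(conj' y)*a0 + conj' x*b0 := ⟨_, rfl⟩
  obtain ⟨q1, hq1⟩ : ∃ q : ℂ, q = -(conj' y)*a1 + conj' x*b1 := ⟨_, rfl⟩
  obtain ⟨q2, hq2⟩ : ∃ q : ℂ, q = -(conj' y)*a2 + conj' x*b2 := ⟨_, rfl⟩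
  obtain ⟨q3, hq3⟩ : ∃ q : ℂ, q = -(conj' y)*a3 + conj' x*b3 := ⟨_, rfl⟩
  have hcp0 : conj' p0 = conj' x*conj' a0 + conj' y*conj' b0 := by
    rw [hp0]; simp [_root_.map_add, _root_.map_mul]
  have hcp1 : conj' p1 = conj' x*conj' a1 + conj' y*conj' b1 := by
    rw [hp1]; simp [_root_.map_add, _root_.map_mul]
  have hcp2 : conj' p2 = conj' x*conj' a2 + conj' y*conj' b2 := by
    rw [hp2]; simp [_root_.map_add, _root_.map_mul]
  have hcp3 : conj' p3 = conj' x*conj' a3 + conj' y*conj' b3 := by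
    rw [hp3]; simp [_root_.map_add, _root_.map_mul]
  have hcq0 : conj' q0 = -y*conj' a0 + x*conj' b0 := by
    rw [hq0]; simp [_root_.map_add, _root_.map_mul]
  have hcq1 : conj' q1 = -y*conj' a1 + x*conj' b1 := by
    rw [hq1]; simp [_root_.map_add, _root_.map_mul]
  have hcq2 : conj' q2 = -y*conj' a2 + x*conj' b2 := by
    rw [hq2]; simp [_root_.map_add, _root_.map_mul]
  have hcq3 : conj' q3 = -y*conj' a3 + x*conj' b3 := by
    rw [hq3]; simp [_root_.map_add, _root_.map_mul]
  have hdetxy : (x*a0+y*b0)*(x*a3+y*b3) - (x*a1+y*b1)*(x*a2+y*b2) = 0 := by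
    rw [hxdef, hydef]
    field_simp
    linear_combination hq
  have hdet : p0*p3 = p1*p2 := by
    linear_combination p3*hp0 + (x*a0 + y*b0)*hp3 - p2*hp1 - (x*a1 + y*b1)*hp2 + hdetxy
  have hPnorm : p0*conj' p0 + p1*conj' p1 + p2*conj' p2 + p3*conj' p3 = 1/2 := by
    linear_combination conj' p0*hp0 + (x*a0 + y*b0)*hcp0 + conj' p1*hp1 + (x*a1 + y*b1)*hcp1 + conj' p2*hp2 + (x*a2 + y*b2)*hcp2 + conj' p3*hp3 + (x*a3 + y*b3)*hcp3 + (x*conj' x)*H1 + (y*conj' y)*H2 + (x*conj' y)*H3 + (y*conj' x)*H4 + (1/2)*hxy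
  have hQnorm : q0*conj' q0 + q1*conj' q1 + q2*conj' q2 + q3*conj' q3 = 1/2 := by
    linear_combination conj' q0*hq0 + (-(conj' y)*a0 + conj' x*b0)*hcq0 + conj' q1*hq1 + (-(conj' y)*a1 + conj' x*b1)*hcq1 + conj' q2*hq2 + (-(conj' y)*a2 + conj' x*b2)*hcq2 + conj' q3*hq3 + (-(conj' y)*a3 + conj' x*b3)*hcq3 + (y*conj' y)*H1 + (x*conj' x)*H2 + (-(conj' y)*x)*H3 + (-(conj' x)*y)*H4 + (1/2)*hxy
  have hrow00 : p0*conj' p0 + p1*conj' p1 + q0*conj' q0 + q1*conj' q1 = 1/2 := by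
    linear_combination conj' p0*hp0 + (x*a0 + y*b0)*hcp0 + conj' q0*hq0 + (-(conj' y)*a0 + conj' x*b0)*hcq0 + conj' p1*hp1 + (x*a1 + y*b1)*hcp1 + conj' q1*hq1 + (-(conj' y)*a1 + conj' x*b1)*hcq1 + H5 + (a0*conj' a0 + a1*conj' a1 + b0*conj' b0 + b1*conj' b1)*hxy
  have hrow01 : p0*conj' p2 + p1*conj' p3 + q0*conj' q2 + q1*conj' q3 = 0 := by
    linear_combination conj' p2*hp0 + (x*a0 + y*b0)*hcp2 + conj' q2*hq0 + (-(conj' y)*a0 + conj' x*b0)*hcq2 + conj' p3*hp1 + (x*a1 + y*b1)*hcp3 + conj' q3*hq1 + (-(conj' y)*a1 + conj' x*b1)*hcq3 + H6 + (a0*conj' a2 + a1*conj' a3 + b0*conj' b2 + b1*conj' b3)*hxy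
  have hrow10 : p2*conj' p0 + p3*conj' p1 + q2*conj' q0 + q3*conj' q1 = 0 := by
    linear_combination conj' p0*hp2 + (x*a2 + y*b2)*hcp0 + conj' q0*hq2 + (-(conj' y)*a2 + conj' x*b2)*hcq0 + conj' p1*hp3 + (x*a3 + y*b3)*hcp1 + conj' q1*hq3 + (-(conj' y)*a3 + conj' x*b3)*hcq1 + H7 + (a2*conj' a0 + a3*conj' a1 + b2*conj' b0 + b3*conj' b1)*hxy
  have hrow11 : p2*conj' p2 + p3*conj' p3 + q2*conj' q2 + q3*conj' q3 = 1/2 := by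
    linear_combination conj' p2*hp2 + (x*a2 + y*b2)*hcp2 + conj' q2*hq2 + (-(conj' y)*a2 + conj' x*b2)*hcq2 + conj' p3*hp3 + (x*a3 + y*b3)*hcp3 + conj' q3*hq3 + (-(conj' y)*a3 + conj' x*b3)*hcq3 + H8 + (a2*conj' a2 + a3*conj' a3 + b2*conj' b2 + b3*conj' b3)*hxy
  have hcol00 : p0*conj' p0 + p2*conj' p2 + q0*conj' q0 + q2*conj' q2 = 1/2 := by
    linear_combination conj' p0*hp0 + (x*a0 + y*b0)*hcp0 + conj' q0*hq0 + (-(conj' y)*a0 + conj' x*b0)*hcq0 + conj' p2*hp2 + (x*a2 + y*b2)*hcp2 + conj' q2*hq2 + (-(conj' y)*a2 + conj' x*b2)*hcq2 + H9 + (a0*conj' a0 + a2*conj' a2 + b0*conj' b0 + b2*conj' b2)*hxy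
  have hcol01 : p0*conj' p1 + p2*conj' p3 + q0*conj' q1 + q2*conj' q3 = 0 := by
    linear_combination conj' p1*hp0 + (x*a0 + y*b0)*hcp1 + conj' q1*hq0 + (-(conj' y)*a0 + conj' x*b0)*hcq1 + conj' p3*hp2 + (x*a2 + y*b2)*hcp3 + conj' q3*hq2 + (-(conj' y)*a2 + conj' x*b2)*hcq3 + H10 + (a0*conj' a1 + a2*conj' a3 + b0*conj' b1 + b2*conj' b3)*hxy
  have hcol10 : p1*conj' p0 + p3*conj' p2 + q1*conj' q0 + q3*conj' q2 = 0 := by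
    linear_combination conj' p0*hp1 + (x*a1 + y*b1)*hcp0 + conj' q0*hq1 + (-(conj' y)*a1 + conj' x*b1)*hcq0 + conj' p2*hp3 + (x*a3 + y*b3)*hcp2 + conj' q2*hq3 + (-(conj' y)*a3 + conj' x*b3)*hcq2 + H11 + (a1*conj' a0 + a3*conj' a2 + b1*conj' b0 + b3*conj' b2)*hxy
  have hcol11 : p1*conj' p1 + p3*conj' p3 + q1*conj' q1 + q3*conj' q3 = 1/2 := by
    linear_combination conj' p1*hp1 + (x*a1 + y*b1)*hcp1 + conj' q1*hq1 + (-(conj' y)*a1 + conj' x*b1)*hcq1 + conj' p3*hp3 + (x*a3 + y*b3)*hcp3 + conj' q3*hq3 + (-(conj' y)*a3 + conj' x*b3)*hcq3 + H12 + (a1*conj' a1 + a3*conj' a3 + b1*conj' b1 + b3*conj' b3)*hxy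
  obtain ⟨u0, u1, t0, t1, w0, w1, hu, ht, hw, horth, hsp0, hsp1, hsp2, hsp3, hsq0, hsq1, hsq2, hsq3⟩ :=
    step2 p0 p1 p2 p3 q0 q1 q2 q3 hdet hPnorm hQnorm hrow00 hrow01 hrow10 hrow11 hcol00 hcol01 hcol10 hcol11
  refine ⟨x, y, u0, u1, t0, t1, w0, w1, hxy, hu, ht, hw, horth, ?_, ?_, ?_, ?_, ?_, ?_, ?_, ?_⟩
  · linear_combination (-a0)*hxy + (conj' x)*hsp0 - (conj' x)*hp0 + (-y)*hsq0 + y*hq0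
  · linear_combination (-a1)*hxy + (conj' x)*hsp1 - (conj' x)*hp1 + (-y)*hsq1 + y*hq1
  · linear_combination (-a2)*hxy + (conj' x)*hsp2 - (conj' x)*hp2 + (-y)*hsq2 + y*hq2
  · linear_combination (-a3)*hxy + (conj' x)*hsp3 - (conj' x)*hp3 + (-y)*hsq3 + y*hq3
  · linear_combination (-b0)*hxy + (conj' y)*hsp0 - (conj' y)*hp0 + x*hsq0 - x*hq0
  · linear_combination (-b1)*hxy + (conj' y)*hsp1 - (conj' y)*hp1 + x*hsq1 - x*hq1
  · linear_combination (-b2)*hxy + (conj' y)*hsp2 - (conj' y)*hp2 + x*hsq2 - x*hq2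
  · linear_combination (-b3)*hxy + (conj' y)*hsp3 - (conj' y)*hp3 + x*hsq3 - x*hq3


theorem completely_mixed_three_qubit_is_ghz (ψ : (Fin 3 → Fin 2) → ℂ)
    (hnorm : ∑ i : Fin 3 → Fin 2, ‖ψ i‖ ^ 2 = 1)
    (hred : ∀ m : Fin 3, reduced1 ψ m = (1 / 2 : ℂ) • 1) :
    ∃ U : Fin 3 → Matrix (Fin 2) (Fin 2) ℂ,
      (∀ k, U k ∈ Matrix.unitaryGroup (Fin 2) ℂ) ∧ ψ = luApply U GHZ := by
  have E : ∀ (m : Fin 3) (a b : Fin 2), reduced1 ψ m a b = if a = b then (1/2 : ℂ) else 0 := by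
    intro m a b
    rw [hred m]
    simp [Matrix.smul_apply, Matrix.one_apply, mul_ite]
  have H1 := (red0 ψ 0 0).symm.trans (E 0 0 0)
  have H2 := (red0 ψ 1 1).symm.trans (E 0 1 1)
  have H3 := (red0 ψ 0 1).symm.trans (E 0 0 1)
  have H4 := (red0 ψ 1 0).symm.trans (E 0 1 0)
  have H5 := (red1 ψ 0 0).symm.trans (E 1 0 0)
  have H6 := (red1 ψ 0 1).symm.trans (E 1 0 1)
  have H7 := (red1 ψ 1 0).symm.trans (E 1 1 0)
  have H8 := (red1 ψ 1 1).symm.trans (E 1 1 1)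
  have H9 := (red2 ψ 0 0).symm.trans (E 2 0 0)
  have H10 := (red2 ψ 0 1).symm.trans (E 2 0 1)
  have H11 := (red2 ψ 1 0).symm.trans (E 2 1 0)
  have H12 := (red2 ψ 1 1).symm.trans (E 2 1 1)
  norm_num at H1 H2 H3 H4 H5 H6 H7 H8 H9 H10 H11 H12
  obtain ⟨x, y, u0, u1, t0, t1, w0, w1, hxy, hu, ht, hw, horth,
      ea0, ea1, ea2, ea3, eb0, eb1, eb2, eb3⟩ :=
    key (ψ ![0,0,0]) (ψ ![0,0,1]) (ψ ![0,1,0]) (ψ ![0,1,1])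
      (ψ ![1,0,0]) (ψ ![1,0,1]) (ψ ![1,1,0]) (ψ ![1,1,1])
      H1 H2 H3 H4 H5 H6 H7 H8 H9 H10 H11 H12
  have horth2 : t0 * conj' w0 + t1 * conj' w1 = 0 := by
    have h := congrArg conj' horth
    simp only [_root_.map_add, _root_.map_mul, Complex.conj_conj, map_zero] at h
    linear_combination h
  set s2 : ℂ := ((Real.sqrt 2 : ℝ) : ℂ) with hs2def
  have hs2 : s2 * s2 = 2 := by
    rw [hs2def, ← Complex.ofReal_mul, Real.mul_self_sqrt (by norm_num)]
    norm_num
  have hs2ne : s2 ≠ 0 := by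
    intro h
    rw [h] at hs2
    norm_num at hs2
  have hcs2 : conj' s2 = s2 := by rw [hs2def, Complex.conj_ofReal]
  refine ⟨![!![conj' x, -y; conj' y, x], !![u0, -(conj' u1); u1, conj' u0],
    !![s2*t0, s2*w0; s2*t1, s2*w1]], ?_, ?_⟩
  · intro k
    fin_cases k
    · rw [Matrix.mem_unitaryGroup_iff]
      ext i j
      fin_cases i <;> fin_cases j <;>
        simp [Matrix.mul_apply, Fin.sum_univ_two, Matrix.one_apply, Matrix.star_apply,
          RCLike.star_def, Complex.conj_conj, _root_.map_neg]
      · linear_combination hxy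
      · ring
      · ring
      · linear_combination hxy
    · rw [Matrix.mem_unitaryGroup_iff]
      ext i j
      fin_cases i <;> fin_cases j <;>
        simp [Matrix.mul_apply, Fin.sum_univ_two, Matrix.one_apply, Matrix.star_apply,
          RCLike.star_def, Complex.conj_conj, _root_.map_neg]
      · linear_combination hu
      · ring
      · ring
      · linear_combination hu
    · rw [Matrix.mem_unitaryGroup_iff']
      ext i j
      fin_cases i <;> fin_cases j <;>
        simp [Matrix.mul_apply, Fin.sum_univ_two, Matrix.one_apply, Matrix.star_apply,
          RCLike.star_def, Complex.conj_conj, _root_.map_mul, hcs2]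
      · linear_combination (conj' t0*t0 + conj' t1*t1)*hs2 + 2*ht
      · linear_combination (conj' t0*w0 + conj' t1*w1)*hs2 + 2*horth
      · linear_combination (t0*conj' w0 + t1*conj' w1)*hs2 + 2*horth2
      · linear_combination (conj' w0*w0 + conj' w1*w1)*hs2 + 2*hw
  · funext i
    have hz : ∀ j : Fin 3 → Fin 2,
        (∏ k, (![!![conj' x, -y; conj' y, x], !![u0, -(conj' u1); u1, conj' u0],
          !![s2*t0, s2*w0; s2*t1, s2*w1]]) k (i k) (j k)) * GHZ j
        = (if j = (fun _ => 0) then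
            (∏ k, (![!![conj' x, -y; conj' y, x], !![u0, -(conj' u1); u1, conj' u0],
              !![s2*t0, s2*w0; s2*t1, s2*w1]]) k (i k) (j k)) / s2 else 0)
          + (if j = (fun _ => 1) then
            (∏ k, (![!![conj' x, -y; conj' y, x], !![u0, -(conj' u1); u1, conj' u0],
              !![s2*t0, s2*w0; s2*t1, s2*w1]]) k (i k) (j k)) / s2 else 0) := by
      intro j
      rw [GHZ]
      have hne01 : ¬((fun (_ : Fin 3) => (0 : Fin 2)) = (fun _ => 1)) := by
        intro h
        exact absurd (congrFun h 0) (by decide)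
      split_ifs with h1 h2
      · exact absurd (h1 ▸ h2) hne01
      · rw [hs2def]; ring
      · rw [hs2def]; ring
      · ring
    rw [luApply]
    rw [Finset.sum_congr rfl (fun j _ => hz j), Finset.sum_add_distrib,
      Finset.sum_ite_eq' Finset.univ, Finset.sum_ite_eq' Finset.univ]
    simp only [Finset.mem_univ, if_true]
    have hi : i = ![i 0, i 1, i 2] := by funext k; fin_cases k <;> rfl
    conv_lhs => rw [hi]
    rw [Fin.prod_univ_three, Fin.prod_univ_three]
    have h2 : ∀ z : Fin 2, z = 0 ∨ z = 1 := by decide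
    rcases h2 (i 0) with h0 | h0 <;> rcases h2 (i 1) with hb | hb <;>
      rcases h2 (i 2) with hc | hc <;> rw [h0, hb, hc] <;>
      simp only [Matrix.cons_val_zero, Matrix.cons_val_one, Matrix.head_cons, Matrix.head_fin_const,
        Matrix.cons_val', Matrix.empty_val', Matrix.cons_val_fin_one, Matrix.cons_val, Matrix.of_apply] <;>
      first
        | (rw [ea0]; field_simp <;> ring)
        | (rw [ea1]; field_simp <;> ring)
        | (rw [ea2]; field_simp <;> ring)
        | (rw [ea3]; field_simp <;> ring)
        | (rw [eb0]; field_simp <;> ring)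
        | (rw [eb1]; field_simp <;> ring)
        | (rw [eb2]; field_simp <;> ring)
        | (rw [eb3]; field_simp <;> ring)
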